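/- arXiv:1806.00125 — 2 statements merged into one kernel-verified Lean document; each statement's English description precedes it below -/
import Mathlib

section
/- Let {R^(k)}_{k≥1} be a nonnegative sequence satisfying R^(k+1) ≤ p R^(k) + Σ_{j=1}^J q_j max_{k' ∈ [max(1, k-M+1), k]} (R^(k'))^{η_j} for all k ≥ 1, where 0 ≤ p < 1, q_j ≥ 0, η_j > 1, and J, M are finite positive integers. If there exists δ with p ≤ δ < 1 such that p + Σ_{j=1}^J q_j (R^(1))^{η_j - 1} ≤ δ, then R^(k) ≤ δ^⌈(k-1)/M⌉ R^(1) for all k ≥ 1. -/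
/-- Maximum of `g` over the integer index range `[a, b]`. -/
noncomputable def seqMax (g : ℕ → ℝ) (a b : ℕ) : ℝ := sSup (g '' Set.Icc a b)

lemma seqMax_le {g : ℕ → ℝ} {a b : ℕ} {C : ℝ} (hC : 0 ≤ C)
    (h : ∀ x, a ≤ x → x ≤ b → g x ≤ C) : seqMax g a b ≤ C :=
  Real.sSup_le (by rintro y ⟨x, ⟨hx1, hx2⟩, rfl⟩; exact h x hx1 hx2) hC

/-- Linear convergence of the nonlinear inequality system (Proposition 5(a)). -/
theorem stmt_4 (R : ℕ → ℝ) (p δ : ℝ) (J M : ℕ) (q η : ℕ → ℝ)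
    (hR : ∀ k, 1 ≤ k → 0 ≤ R k)
    (hp : 0 ≤ p) (hp1 : p < 1)
    (hq : ∀ j, j < J → 0 ≤ q j) (hη : ∀ j, j < J → 1 < η j)
    (hJ : 1 ≤ J) (hM : 1 ≤ M)
    (hrec : ∀ k, 1 ≤ k →
      R (k + 1) ≤ p * R k + ∑ j ∈ Finset.range J,
        q j * seqMax (fun k' => R k' ^ η j) (max 1 (k - M + 1)) k)
    (hδ1 : p ≤ δ) (hδ2 : δ < 1)
    (hcond : p + ∑ j ∈ Finset.range J, q j * R 1 ^ (η j - 1) ≤ δ) :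
    ∀ k, 1 ≤ k → R k ≤ δ ^ ((k - 1 + M - 1) / M) * R 1 := by
  have hδ0 : 0 ≤ δ := le_trans hp hδ1
  have hR1 : 0 ≤ R 1 := hR 1 le_rfl
  intro k
  induction k using Nat.strong_induction_on with
  | _ k ih =>
    intro hk
    obtain ⟨m, rfl⟩ : ∃ m, k = m + 1 := ⟨k - 1, by omega⟩
    rcases Nat.eq_zero_or_pos m with rfl | hm
    · have : (1 - 1 + M - 1) / M = 0 := Nat.div_eq_of_lt (by omega)
      rw [this]
      simp
    -- m ≥ 1
    set a := max 1 (m - M + 1) with ha_def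
    have ha1 : 1 ≤ a := le_max_left _ _
    have ham : a ≤ m := by omega
    have haM : a - 1 = m - M := by omega
    -- arithmetic lemma
    have hstep : (m + 1 - 1 + M - 1) / M ≤ (a - 1 + M - 1) / M + 1 := by
      rw [haM]
      rcases le_or_gt M m with h | h
      · have h1 : m + 1 - 1 + M - 1 = (m - 1) + M := by omega
        have h2 : m - M + M - 1 = m - 1 := by omega
        rw [h1, h2, Nat.add_div_right _ (by omega)]
      · have hf : (m - M + M - 1) / M = 0 := Nat.div_eq_of_lt (by omega)
        have he : (m + 1 - 1 + M - 1) / M < 2 :=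
          (Nat.div_lt_iff_lt_mul (by omega)).2 (by omega)
        omega
    -- bound over the window
    set c := (a - 1 + M - 1) / M with hc_def
    set B := δ ^ c * R 1 with hB_def
    have hB0 : 0 ≤ B := mul_nonneg (pow_nonneg hδ0 _) hR1
    have hwin : ∀ k', a ≤ k' → k' ≤ m → R k' ≤ B := by
      intro k' h1 h2
      have hck : c ≤ (k' - 1 + M - 1) / M := Nat.div_le_div_right (by omega)
      calc R k' ≤ δ ^ ((k' - 1 + M - 1) / M) * R 1 := ih k' (by omega) (by omega)
        _ ≤ δ ^ c * R 1 :=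
          mul_le_mul_of_nonneg_right (pow_le_pow_of_le_one hδ0 hδ2.le hck) hR1
    have hwin1 : ∀ k', a ≤ k' → k' ≤ m → R k' ≤ R 1 := by
      intro k' h1 h2
      calc R k' ≤ B := hwin k' h1 h2
        _ ≤ 1 * R 1 := mul_le_mul_of_nonneg_right (pow_le_one₀ hδ0 hδ2.le) hR1
        _ = R 1 := one_mul _
    -- each seqMax bound
    have hsm : ∀ j, j < J →
        seqMax (fun k' => R k' ^ η j) a m ≤ R 1 ^ (η j - 1) * B := by
      intro j hj
      have hη1 : (0:ℝ) < η j - 1 := by linarith [hη j hj]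
      have hC0 : 0 ≤ R 1 ^ (η j - 1) * B :=
        mul_nonneg (Real.rpow_nonneg hR1 _) hB0
      refine seqMax_le hC0 ?_
      intro x hx1 hx2
      have hx0 : 0 ≤ R x := hR x (by omega)
      rcases eq_or_lt_of_le hx0 with h0 | h0
      · rw [← h0, Real.zero_rpow (by linarith [hη j hj])]
        exact hC0
      · have heq := Real.rpow_add_one (x := R x) h0.ne' (η j - 1)
        rw [show η j - 1 + 1 = η j by ring] at heq
        rw [heq]
        exact mul_le_mul (Real.rpow_le_rpow hx0 (hwin1 x hx1 hx2) hη1.le)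
          (hwin x hx1 hx2) hx0 (Real.rpow_nonneg hR1 _)
    -- put it together
    have hmain : R (m + 1) ≤ (p + ∑ j ∈ Finset.range J, q j * R 1 ^ (η j - 1)) * B := by
      calc R (m + 1) ≤ p * R m + ∑ j ∈ Finset.range J,
            q j * seqMax (fun k' => R k' ^ η j) a m := hrec m hm
        _ ≤ p * B + ∑ j ∈ Finset.range J, q j * (R 1 ^ (η j - 1) * B) := by
            gcongr with j hj
            · exact hwin m ham le_rfl
            · exact hq j (Finset.mem_range.1 hj)
            · exact hsm j (Finset.mem_range.1 hj)
        _ = (p + ∑ j ∈ Finset.range J, q j * R 1 ^ (η j - 1)) * B := by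
            rw [add_mul, Finset.sum_mul]
            congr 1
            exact Finset.sum_congr rfl fun j _ => by ring
    calc R (m + 1) ≤ (p + ∑ j ∈ Finset.range J, q j * R 1 ^ (η j - 1)) * B := hmain
      _ ≤ δ * B := mul_le_mul_of_nonneg_right hcond hB0
      _ = δ ^ (c + 1) * R 1 := by rw [hB_def, pow_succ]; ring
      _ ≤ δ ^ ((m + 1 - 1 + M - 1) / M) * R 1 :=
          mul_le_mul_of_nonneg_right (pow_le_pow_of_le_one hδ0 hδ2.le hstep) hR1
end

section
/- Let v^k, θ^k, y^k ∈ ℝ^d be sequences satisfying v^1 = θ^1 = y^1, the recursions v^(k+1) = ρ v^k + √(μγ) y^k - √(γ/μ) g^k, θ^(k+1) = y^k - γ g^k, and ρ(θ^(k+1) - θ^k) = (1 + √(μγ))(y^(k+1) - θ^(k+1)), where ρ = 1 - √(μγ), μ, γ > 0 with μγ < 1, and {g^k} is an arbitrary sequence in ℝ^d. Then v^k - y^k = (√(μγ))^{-1}(y^k - θ^k) for all k ≥ 1. -/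
/-!
The identity is an invariant of the recursion. Writing `s = √(μγ)`, one has `√(γ/μ) = γ / s`, and
the extrapolation rule solves to `y' = θ' + ((1 - s) / (1 + s)) • (θ' - θ)`; substituting both into
the update of `v` turns `v - y = s⁻¹ • (y - θ)` into the same relation one step later, by linear
algebra in `y, θ, g`. At `k = 1` both sides vanish.
-/

lemma Real.sqrt_div_eq_div_sqrt_mul {μ γ : ℝ} (hγ : 0 ≤ γ) :
    √(γ / μ) = γ / √(μ * γ) := by
  rcases hγ.eq_or_lt with rfl | hγ
  · simp
  rw [Real.sqrt_div hγ.le, Real.sqrt_mul' _ hγ.le,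
    ← mul_div_mul_right (√γ) (√μ) (Real.sqrt_pos.mpr hγ).ne', Real.mul_self_sqrt hγ.le]

section Extrapolation

variable {K E : Type*} [Field K] [AddCommGroup E] [Module K E]

lemma eq_add_smul_of_extrapolation {s : K} (hs : 1 + s ≠ 0) {θ θ' y' : E}
    (hy : (1 - s) • (θ' - θ) = (1 + s) • (y' - θ')) :
    y' = θ' + ((1 - s) / (1 + s)) • (θ' - θ) := by
  rw [div_eq_inv_mul, mul_smul, hy, smul_smul, inv_mul_cancel₀ hs, one_smul,
    add_sub_cancel]

lemma sub_eq_inv_smul_sub_of_step {s γ : K} (hs : s ≠ 0) (hs' : 1 + s ≠ 0)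
    {v θ y g v' θ' y' : E} (hinv : v - y = s⁻¹ • (y - θ))
    (hv : v' = (1 - s) • v + s • y - (γ / s) • g) (hθ : θ' = y - γ • g)
    (hy : (1 - s) • (θ' - θ) = (1 + s) • (y' - θ')) :
    v' - y' = s⁻¹ • (y' - θ') := by
  have hv_eq : v = y + s⁻¹ • (y - θ) := by rw [← hinv, add_sub_cancel]
  rw [eq_add_smul_of_extrapolation hs' hy, hv, hθ, hv_eq]
  match_scalars <;> field_simp <;> ring

end Extrapolation

theorem stmt_9_general {d : ℕ} (μ γ : ℝ)
    (hμ : 0 < μ) (hγ : 0 < γ)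
    (v θ y g : ℕ → EuclideanSpace ℝ (Fin d))
    (hinit : v 1 = θ 1 ∧ θ 1 = y 1)
    (hv : ∀ k, 1 ≤ k →
      v (k + 1) = (1 - Real.sqrt (μ * γ)) • v k + Real.sqrt (μ * γ) • y k
        - Real.sqrt (γ / μ) • g k)
    (hθ : ∀ k, 1 ≤ k → θ (k + 1) = y k - γ • g k)
    (hy : ∀ k, 1 ≤ k →
      (1 - Real.sqrt (μ * γ)) • (θ (k + 1) - θ k)
        = (1 + Real.sqrt (μ * γ)) • (y (k + 1) - θ (k + 1))) :
    ∀ k, 1 ≤ k → v k - y k = (Real.sqrt (μ * γ))⁻¹ • (y k - θ k) := by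
  have hs : 0 < √(μ * γ) := Real.sqrt_pos.mpr (mul_pos hμ hγ)
  intro k hk
  induction k, hk using Nat.le_induction with
  | base => simp [hinit.1, hinit.2]
  | succ k hk ih =>
    refine sub_eq_inv_smul_sub_of_step hs.ne' (by positivity) ih ?_ (hθ k hk) (hy k hk)
    rw [hv k hk, Real.sqrt_div_eq_div_sqrt_mul hγ.le]

/-- The estimate-sequence minimizer identity for the Nesterov extrapolation step. -/
theorem stmt_9 {d : ℕ} (hd : 1 ≤ d) (μ γ : ℝ)
    (hμ : 0 < μ) (hγ : 0 < γ) (hμγ : μ * γ < 1)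
    (v θ y g : ℕ → EuclideanSpace ℝ (Fin d))
    (hinit : v 1 = θ 1 ∧ θ 1 = y 1)
    (hv : ∀ k, 1 ≤ k →
      v (k + 1) = (1 - Real.sqrt (μ * γ)) • v k + Real.sqrt (μ * γ) • y k
        - Real.sqrt (γ / μ) • g k)
    (hθ : ∀ k, 1 ≤ k → θ (k + 1) = y k - γ • g k)
    (hy : ∀ k, 1 ≤ k →
      (1 - Real.sqrt (μ * γ)) • (θ (k + 1) - θ k)
        = (1 + Real.sqrt (μ * γ)) • (y (k + 1) - θ (k + 1))) :
    ∀ k, 1 ≤ k → v k - y k = (Real.sqrt (μ * γ))⁻¹ • (y k - θ k) :=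
  stmt_9_general μ γ hμ hγ v θ y g hinit hv hθ hy
end
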